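/- arXiv:2402.11200 — 2 statements merged into one kernel-verified Lean document; each statement's English description precedes it below -/
import Mathlib

section
/- Let μ be a probability measure, ν a measure with ν ≪ μ, and f = dν/dμ the Radon–Nikodym derivative. Let K be a Markov kernel and let K*_μ denote the adjoint operator of K with respect to the inner products ⟨·,·⟩_μ and ⟨·,·⟩_{μK}. Then dνK/dμK = K*_μ f holds μK-almost everywhere. -/
/-!
Testing the adjoint relation against `h = 1_s` gives
`∫_s K*f d(μK) = ∫ K(s|x) f(x) dμ(x) = νK(s)` for every measurable `s` on which `K*f` is
integrable, in particular for every measurable subset of one of the sets `{|K*f| ≤ n}`, which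
exhaust `Ω`. Since `νK ≪ μK`, the density `dνK/dμK` has the same integrals over these
subsets, so it agrees with `K*f` on each `{|K*f| ≤ n}`.
-/

open MeasureTheory ProbabilityTheory

namespace MeasureTheory.Measure

variable {α : Type*} [MeasurableSpace α]

theorem toReal_rnDeriv_ae_eq_of_forall_setIntegral_eq {ρ η : Measure α} [IsFiniteMeasure ρ]
    [IsFiniteMeasure η] (hηρ : η ≪ ρ) {g : α → ℝ} (hg : Measurable g)
    (h : ∀ s, MeasurableSet s → IntegrableOn g s ρ → ∫ x in s, g x ∂ρ = η.real s) :
    (fun x => (η.rnDeriv ρ x).toReal) =ᵐ[ρ] g := by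
  -- `g` need not be integrable a priori, so compare on the sets where it is bounded
  let B : ℕ → Set α := fun n => g ⁻¹' Set.Icc (-n) n
  have hB : ∀ n, MeasurableSet (B n) := fun n => hg measurableSet_Icc
  have hB_cover : ⋃ n, B n = Set.univ := by
    refine Set.eq_univ_of_forall fun x => Set.mem_iUnion.2 ?_
    obtain ⟨n, hn⟩ := exists_nat_ge |g x|
    exact ⟨n, abs_le.1 hn⟩
  suffices ∀ n, (fun x => (η.rnDeriv ρ x).toReal) =ᵐ[ρ.restrict (B n)] g by
    have h_univ := (ae_restrict_iUnion_iff B _).2 this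
    rwa [hB_cover, restrict_univ] at h_univ
  intro n
  have hg_int : IntegrableOn g (B n) ρ :=
    IntegrableOn.of_bound (measure_lt_top _ _) hg.aestronglyMeasurable n
      ((ae_restrict_iff' (hB n)).2 (Filter.Eventually.of_forall fun x hx => abs_le.2 hx))
  refine Integrable.ae_eq_of_forall_setIntegral_eq _ _ integrable_toReal_rnDeriv.restrict hg_int
    fun s hs _ => ?_
  rw [restrict_restrict hs, setIntegral_toReal_rnDeriv hηρ, h _ (hs.inter (hB n))
    (hg_int.mono_set Set.inter_subset_right)]

theorem integral_measureReal_mul_toReal_rnDeriv {β : Type*} [MeasurableSpace β]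
    {μ ν : Measure α} [ν.HaveLebesgueDecomposition μ] [SigmaFinite ν] (κ : Kernel α β)
    [IsFiniteKernel κ] (hνμ : ν ≪ μ) {s : Set β} (hs : MeasurableSet s) :
    ∫ x, (κ x).real s * (ν.rnDeriv μ x).toReal ∂μ = (κ ∘ₘ ν).real s := by
  simp_rw [mul_comm _ (ν.rnDeriv μ _).toReal]
  rw [integral_toReal_rnDeriv_mul hνμ, measureReal_def, bind_apply hs κ.aemeasurable]
  exact integral_toReal (κ.measurable_coe hs).aemeasurable
    (ae_of_all _ fun x => measure_lt_top _ _)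

end MeasureTheory.Measure

/-- If `ν ≪ μ` with density `f = dν/dμ`, and `K*_μ` is the adjoint
of the Markov kernel `K` (w.r.t. the inner products of `L²(μ)` and `L²(μK)`),
then `dνK/dμK = K*_μ f`, `μK`-almost everywhere. -/
theorem rnDeriv_bind_eq_adjoint_rnDeriv
    {Ω : Type*} [MeasurableSpace Ω]
    (κ : Kernel Ω Ω) [IsMarkovKernel κ]
    (μ ν : Measure Ω) [IsProbabilityMeasure μ] [IsFiniteMeasure ν]
    (hac : ν ≪ μ)
    (Kstar : (Ω → ℝ) → (Ω → ℝ))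
    (hKstar_meas : ∀ f : Ω → ℝ, Measurable f → Measurable (Kstar f))
    (hadj : ∀ (h f : Ω → ℝ), Measurable h → Measurable f →
      Integrable (fun x => (∫ y, h y ∂(κ x)) * f x) μ →
      Integrable (fun x => h x * Kstar f x) (μ.bind κ) →
      ∫ x, (∫ y, h y ∂(κ x)) * f x ∂μ = ∫ x, h x * Kstar f x ∂(μ.bind κ)) :
    (fun x => ((ν.bind κ).rnDeriv (μ.bind κ) x).toReal)
      =ᵐ[μ.bind κ] Kstar (fun y => (ν.rnDeriv μ y).toReal) := by
  set f : Ω → ℝ := fun y => (ν.rnDeriv μ y).toReal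
  have hf : Measurable f := (Measure.measurable_rnDeriv ν μ).ennreal_toReal
  refine Measure.toReal_rnDeriv_ae_eq_of_forall_setIntegral_eq (hac.comp_right κ)
    (hKstar_meas f hf) fun s hs hint => ?_
  have h_kernel : ∀ x, ∫ y, s.indicator 1 y ∂(κ x) = (κ x).real s :=
    fun x => integral_indicator_one hs
  have h_mul : (fun x => s.indicator 1 x * Kstar f x) = s.indicator (Kstar f) := by
    ext x
    by_cases hx : x ∈ s <;> simp [hx]
  have h_int_left : Integrable (fun x => (∫ y, s.indicator 1 y ∂(κ x)) * f x) μ := by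
    simp only [h_kernel]
    exact Measure.integrable_toReal_rnDeriv.bdd_mul (c := 1)
      (κ.measurable_coe hs).ennreal_toReal.aestronglyMeasurable
      (ae_of_all _ fun x => by
        rw [Real.norm_of_nonneg measureReal_nonneg]; exact measureReal_le_one)
  have h_int_right : Integrable (fun x => s.indicator 1 x * Kstar f x) (μ.bind κ) := by
    rwa [h_mul, integrable_indicator_iff hs]
  have h_adj := hadj (s.indicator 1) f (measurable_const.indicator hs) hf h_int_left h_int_right
  rw [h_mul, integral_indicator hs] at h_adj
  simp only [h_kernel] at h_adj
  exact h_adj.symm.trans (Measure.integral_measureReal_mul_toReal_rnDeriv κ hac hs)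
end

section
/- Let π be a probability measure on a countable (discrete) space Ω and x ∈ Ω with π({x}) ≥ 1/2. Let ψ be a Young function. Then the Luxemburg norm of dδ_x/dπ − 1 with respect to π satisfies ‖dδ_x/dπ − 1‖^L_{ψ,π} ≤ 1/ψ⁻¹( 1/(2π(Ω∖{x})) ). -/
open Classical MeasureTheory
open scoped ENNReal

/-- A Young function: convex, non-decreasing on `ℝ⁺`, vanishing at `0`, tending to `∞`. -/
def IsYoung (ψ : ℝ → ℝ) : Prop :=
  ConvexOn ℝ (Set.Ici 0) ψ ∧ MonotoneOn ψ (Set.Ici 0) ∧ ψ 0 = 0 ∧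
    Filter.Tendsto ψ Filter.atTop Filter.atTop ∧ ∀ x ∈ Set.Ici (0:ℝ), 0 ≤ ψ x

/-- The Luxemburg norm of `f` with respect to the Young function `ψ` and measure `π`. -/
noncomputable def luxNorm {Ω : Type*} [MeasurableSpace Ω] (ψ : ℝ → ℝ)
    (π : MeasureTheory.Measure Ω) (f : Ω → ℝ) : ℝ :=
  sInf {σ : ℝ | 0 < σ ∧ ∫ x, ψ (|f x| / σ) ∂π ≤ 1}

/-- The Amemiya norm of `f` with respect to the Young function `ψ` and measure `π`. -/
noncomputable def amNorm {Ω : Type*} [MeasurableSpace Ω] (ψ : ℝ → ℝ)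
    (π : MeasureTheory.Measure Ω) (f : Ω → ℝ) : ℝ :=
  sInf {a : ℝ | ∃ t : ℝ, 0 < t ∧ a = (1 + ∫ x, ψ (t * |f x|) ∂π) / t}

/-- Membership in the Orlicz space `L_ψ(π)`. -/
def MemOrlicz {Ω : Type*} [MeasurableSpace Ω] (ψ : ℝ → ℝ)
    (π : MeasureTheory.Measure Ω) (f : Ω → ℝ) : Prop :=
  ∃ lam : ℝ, 0 < lam ∧ MeasureTheory.Integrable (fun x => ψ (lam * |f x|)) π

/-- Generalized inverse of a non-decreasing function on `ℝ⁺`. -/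
noncomputable def genInv (φ : ℝ → ℝ) (y : ℝ) : ℝ :=
  sInf {x : ℝ | 0 ≤ x ∧ y ≤ φ x}

/-
Write `p = π({x})` and `q = π(Ω∖{x}) = 1 - p ≤ p`. The integrand `ψ(|dδ_x/dπ - 1| / σ)` takes the
value `ψ((q/p)/σ)` at `x` and `ψ(1/σ)` elsewhere, so by convexity and `ψ(0) = 0` the modular is at
most `p · (q/p) ψ(1/σ) + q ψ(1/σ) = 2q ψ(1/σ)`. This is `≤ 1` as soon as `1/σ` lies below
`ψ⁻¹(1/(2q))`, i.e. for every `σ > 1/ψ⁻¹(1/(2q))`.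
-/

theorem ConvexOn.map_mul_le_of_map_zero {f : ℝ → ℝ} (hf : ConvexOn ℝ (Set.Ici 0) f) (h0 : f 0 = 0)
    {a t : ℝ} (ha0 : 0 ≤ a) (ha1 : a ≤ 1) (ht : 0 ≤ t) : f (a * t) ≤ a * f t := by
  have h := hf.2 (Set.mem_Ici.2 ht) Set.self_mem_Ici ha0 (sub_nonneg.2 ha1) (by ring)
  simpa [h0] using h

theorem genInv_nonneg (φ : ℝ → ℝ) (y : ℝ) : 0 ≤ genInv φ y :=
  Real.sInf_nonneg fun _ hz => hz.1

theorem lt_of_lt_genInv {φ : ℝ → ℝ} {y t : ℝ} (ht : 0 ≤ t) (htφ : t < genInv φ y) : φ t < y := by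
  by_contra! h
  exact htφ.not_ge (csInf_le ⟨0, fun _ hz => hz.1⟩ ⟨ht, h⟩)

namespace IsYoung

variable {ψ : ℝ → ℝ}

theorem map_mul_le (hψ : IsYoung ψ) {a t : ℝ} (ha0 : 0 ≤ a) (ha1 : a ≤ 1) (ht : 0 ≤ t) :
    ψ (a * t) ≤ a * ψ t :=
  hψ.1.map_mul_le_of_map_zero hψ.2.2.1 ha0 ha1 ht

/-- Near `0`, `ψ` lies below the chord `z ↦ z ψ(1)`, so small arguments cannot reach level `y`. -/
theorem genInv_pos (hψ : IsYoung ψ) {y : ℝ} (hy : 0 < y) : 0 < genInv ψ y := by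
  obtain ⟨z₀, hz₀y, hz₀⟩ :=
    ((hψ.2.2.2.1.eventually_ge_atTop y).and (Filter.eventually_ge_atTop 0)).exists
  have hψ1 : 0 ≤ ψ 1 := hψ.2.2.2.2 1 (Set.mem_Ici.2 zero_le_one)
  refine (lt_min one_pos (by positivity : 0 < y / (ψ 1 + 1))).trans_le
    (le_csInf ⟨z₀, hz₀, hz₀y⟩ ?_)
  rintro z ⟨hz0, hzy⟩
  rcases le_or_gt 1 z with h1 | h1
  · exact (min_le_left _ _).trans h1
  · have hchord : ψ z ≤ z * ψ 1 := by simpa using hψ.map_mul_le hz0 h1.le zero_le_one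
    refine (min_le_right _ _).trans ((div_le_iff₀ (by positivity)).2 ?_)
    nlinarith

theorem mul_map_inv_le_one (hψ : IsYoung ψ) {c σ : ℝ} (hc : 0 ≤ c) (hσ : 0 < σ)
    (hσc : 1 / genInv ψ (1 / c) < σ) : c * ψ (1 / σ) ≤ 1 := by
  rcases hc.eq_or_lt with rfl | hc
  · simp
  have hpos : 0 < genInv ψ (1 / c) := hψ.genInv_pos (by positivity)
  have hlt : 1 / σ < genInv ψ (1 / c) := by
    rwa [div_lt_iff₀ hσ, mul_comm, ← div_lt_iff₀ hpos]
  have := lt_of_lt_genInv (by positivity) hlt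
  rw [lt_div_iff₀ hc] at this
  linarith

end IsYoung

theorem luxNorm_le_of_forall_lt {Ω : Type*} [MeasurableSpace Ω] {ψ : ℝ → ℝ}
    {π : Measure Ω} {f : Ω → ℝ} {s : ℝ} (hs : 0 ≤ s)
    (h : ∀ σ, s < σ → ∫ ω, ψ (|f ω| / σ) ∂π ≤ 1) : luxNorm ψ π f ≤ s :=
  le_of_forall_pos_le_add fun ε hε =>
    csInf_le ⟨0, fun _ hσ => hσ.1.le⟩ ⟨by positivity, h _ (lt_add_of_pos_right s hε)⟩

theorem integral_ite_eq_singleton {Ω : Type*} [MeasurableSpace Ω] [MeasurableSingletonClass Ω]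
    (π : Measure Ω) [IsFiniteMeasure π] (x : Ω) (a b : ℝ) :
    ∫ ω, (if ω = x then a else b) ∂π = (π {x}).toReal * a + (π {x}ᶜ).toReal * b := by
  have h := integral_piecewise (measurableSet_singleton x) (integrableOn_const (C := a))
    (integrableOn_const (C := b)) (μ := π)
  simp only [Set.piecewise, Set.mem_singleton_iff, setIntegral_const, smul_eq_mul] at h
  exact h

theorem luxemburg_norm_dirac_density_bound_general
    {Ω : Type*} [MeasurableSpace Ω] [MeasurableSingletonClass Ω]
    (π : Measure Ω) [IsProbabilityMeasure π]
    (ψ : ℝ → ℝ) (hψ : IsYoung ψ)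
    (x : Ω) (hx : (1 : ℝ≥0∞) / 2 ≤ π {x}) :
    luxNorm ψ π (fun ω => (if ω = x then 1 / (π {x}).toReal else 0) - 1)
      ≤ 1 / genInv ψ (1 / (2 * (π ({x}ᶜ)).toReal)) := by
  set p := (π {x}).toReal
  set q := (π {x}ᶜ).toReal
  have hq : q = 1 - p := probReal_compl_eq_one_sub (measurableSet_singleton x)
  have hp : 1 / 2 ≤ p := by simpa using ENNReal.toReal_mono (measure_ne_top π {x}) hx
  have hq0 : 0 ≤ q := ENNReal.toReal_nonneg
  have hqp : q / p ≤ 1 := (div_le_one (by linarith)).2 (by linarith)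
  have habs : |1 / p - 1| = q / p := by
    rw [abs_of_nonneg (by rw [sub_nonneg, le_div_iff₀ (by linarith)]; linarith)]
    field_simp
    linarith
  refine luxNorm_le_of_forall_lt (div_nonneg zero_le_one (genInv_nonneg _ _)) fun σ hσ => ?_
  have hσ0 : 0 < σ := (div_nonneg zero_le_one (genInv_nonneg _ _)).trans_lt hσ
  have hinteg : (fun ω => ψ (|(if ω = x then 1 / p else 0) - 1| / σ))
      = fun ω => if ω = x then ψ (q / p * (1 / σ)) else ψ (1 / σ) := by
    funext ω
    split_ifs
    · rw [habs, mul_one_div]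
    · norm_num
  calc ∫ ω, ψ (|(if ω = x then 1 / p else 0) - 1| / σ) ∂π
      = p * ψ (q / p * (1 / σ)) + q * ψ (1 / σ) := by rw [hinteg, integral_ite_eq_singleton]
    _ ≤ p * (q / p * ψ (1 / σ)) + q * ψ (1 / σ) := by
        gcongr
        exact hψ.map_mul_le (by positivity) hqp (by positivity)
    _ = 2 * q * ψ (1 / σ) := by field_simp; ring
    _ ≤ 1 := hψ.mul_map_inv_le_one (by positivity) hσ0 hσ

/-- On a countable space, if `π({x}) ≥ 1/2` then the Luxemburg
norm of `dδ_x/dπ − 1` is at most `1/ψ⁻¹(1/(2π(Ω∖{x})))`. -/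
theorem luxemburg_norm_dirac_density_bound
    {Ω : Type*} [MeasurableSpace Ω] [Countable Ω] [MeasurableSingletonClass Ω]
    (π : Measure Ω) [IsProbabilityMeasure π]
    (ψ : ℝ → ℝ) (hψ : IsYoung ψ)
    (x : Ω) (hx : (1 : ℝ≥0∞) / 2 ≤ π {x}) :
    luxNorm ψ π (fun ω => (if ω = x then 1 / (π {x}).toReal else 0) - 1)
      ≤ 1 / genInv ψ (1 / (2 * (π ({x}ᶜ)).toReal)) :=
  luxemburg_norm_dirac_density_bound_general π ψ hψ x hx
end
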